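/- arXiv:1708.08323 — 10 statements merged into one kernel-verified Lean document; each statement's English description precedes it below -/
import Mathlib

section
/- Let (PO, RF) be an event order graph over an event structure, and let < be a feasible witness for (PO, RF). Then < contains every derived order: for all events a and b, if (a, b) ∈ Derived(PO, RF), then a < b. -/
/-- An event structure: events `E`, shared variables `V`, a variable map, and a
write predicate. Events that are not writes are reads. -/
structure EventStructure (E V : Type*) where
  var : E → V
  isWrite : E → Prop

/-- `(PO, RF)` is an event order graph over `S`: every read-from pair `(w, r)`
goes from a write to a read of the same variable. (`PO` is unconstrained.) -/
def IsEOG {E V : Type*} (S : EventStructure E V) (PO RF : E → E → Prop) : Prop :=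
  ∀ w r, RF w r → S.isWrite w ∧ ¬ S.isWrite r ∧ S.var w = S.var r

/-- `lt` is a feasible witness for the EOG `(PO, RF)`: a strict linear order
containing `PO`, containing `RF`, and such that no other write of the same
variable falls strictly between a read-from pair. -/
structure FeasibleWitness {E V : Type*} (S : EventStructure E V)
    (PO RF lt : E → E → Prop) : Prop where
  irrefl : ∀ a, ¬ lt a a
  trans : ∀ a b c, lt a b → lt b c → lt a c
  total : ∀ a b, a ≠ b → lt a b ∨ lt b a
  po : ∀ a b, PO a b → lt a b
  rf_lt : ∀ w r, RF w r → lt w r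
  rf_sep : ∀ w r, RF w r → ∀ w', S.isWrite w' → S.var w' = S.var w → w' ≠ w →
      lt w' w ∨ lt r w'

/-- The EOG `(PO, RF)` is feasible if some feasible witness exists. -/
def Feasible {E V : Type*} (S : EventStructure E V) (PO RF : E → E → Prop) : Prop :=
  ∃ lt : E → E → Prop, FeasibleWitness S PO RF lt

/-- The derived order relation: the least relation containing `PO` and `RF`
and closed under transitivity (Rule 1) and Rules 2 and 3. -/
inductive Derived {E V : Type*} (S : EventStructure E V) (PO RF : E → E → Prop) :
    E → E → Prop
  | po {a b : E} : PO a b → Derived S PO RF a b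
  | rf {a b : E} : RF a b → Derived S PO RF a b
  | trans {a b c : E} : Derived S PO RF a b → Derived S PO RF b c → Derived S PO RF a c
  | rule2 {w r w' : E} : RF w r → Derived S PO RF w' r → S.isWrite w' →
      S.var w' = S.var w → w' ≠ w → Derived S PO RF w' w
  | rule3 {w r w' : E} : RF w r → Derived S PO RF w w' → S.isWrite w' →
      S.var w' = S.var w → w' ≠ w → Derived S PO RF r w'

/-- A feasible witness contains every derived order. -/
theorem stmt_0 {E V : Type*} (S : EventStructure E V) (PO RF lt : E → E → Prop)
    (hEOG : IsEOG S PO RF) (hW : FeasibleWitness S PO RF lt) :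
    ∀ a b : E, Derived S PO RF a b → lt a b := by
  intro a b h
  induction h with
  | po h => exact hW.po _ _ h
  | rf h => exact hW.rf_lt _ _ h
  | trans h1 h2 ih1 ih2 => exact hW.trans _ _ _ ih1 ih2
  | rule2 hrf hd hw hv hne ih =>
      rcases hW.rf_sep _ _ hrf _ hw hv hne with h | h
      · exact h
      · exact absurd (hW.trans _ _ _ ih h) (hW.irrefl _)
  | rule3 hrf hd hw hv hne ih =>
      rcases hW.rf_sep _ _ hrf _ hw hv hne with h | h
      · exact absurd (hW.trans _ _ _ ih h) (hW.irrefl _)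
      · exact h
end

section
/- Let (PO, RF) be an event order graph over an event structure. If there exists an event e such that (e, e) ∈ Derived(PO, RF), then the EOG (PO, RF) is infeasible, i.e., no feasible witness for (PO, RF) exists. -/
/-- A derived-order cycle implies infeasibility. -/
theorem stmt_1 {E V : Type*} (S : EventStructure E V) (PO RF : E → E → Prop)
    (hEOG : IsEOG S PO RF) (hcyc : ∃ e : E, Derived S PO RF e e) :
    ¬ Feasible S PO RF := by
  rintro ⟨lt, hW⟩
  obtain ⟨e, he⟩ := hcyc
  have key : ∀ a b, Derived S PO RF a b → lt a b := by
    intro a b h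
    induction h with
    | po h => exact hW.po _ _ h
    | rf h => exact hW.rf_lt _ _ h
    | trans h1 h2 ih1 ih2 => exact hW.trans _ _ _ ih1 ih2
    | rule2 hrf hd hw hv hne ih =>
        rcases hW.rf_sep _ _ hrf _ hw hv hne with h | h
        · exact h
        · exact absurd (hW.trans _ _ _ ih h) (hW.irrefl _)
    | rule3 hrf hd hw hv hne ih =>
        rcases hW.rf_sep _ _ hrf _ hw hv hne with h | h
        · exact absurd (hW.trans _ _ _ h ih) (hW.irrefl _)
        · exact h
  exact hW.irrefl e (key e e he)
end

section
/- (Finite support of derived orders.) Let PO and RF be binary relations on the events of an event structure (the type of events may be infinite). If (a, b) ∈ Derived(PO, RF), then there exist relations S ⊆ PO and F ⊆ RF, each holding for only finitely many pairs of events, such that (a, b) ∈ Derived(S, F). -/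
/-!
Each derivation of `Derived S PO RF a b` is a finite tree, and every leaf or application of
Rules 2 and 3 consumes a single `PO` or `RF` edge; collecting these edges along the derivation
gives finite sub-relations that still derive `(a, b)`.
-/

namespace Derived

variable {E V : Type*} {S : EventStructure E V} {PO RF PO' RF' : E → E → Prop} {a b : E}

theorem mono (h : Derived S PO RF a b) (hPO : PO ≤ PO') (hRF : RF ≤ RF') :
    Derived S PO' RF' a b := by
  induction h with
  | po h => exact .po (hPO _ _ h)
  | rf h => exact .rf (hRF _ _ h)
  | trans _ _ ih₁ ih₂ => exact .trans ih₁ ih₂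
  | rule2 h _ hw hv hne ih => exact .rule2 (hRF _ _ h) ih hw hv hne
  | rule3 h _ hw hv hne ih => exact .rule3 (hRF _ _ h) ih hw hv hne

theorem exists_finite_support (h : Derived S PO RF a b) :
    ∃ s t : Set (E × E), s.Finite ∧ t.Finite ∧ (∀ p ∈ s, PO p.1 p.2) ∧ (∀ p ∈ t, RF p.1 p.2) ∧
      Derived S (fun x y => (x, y) ∈ s) (fun x y => (x, y) ∈ t) a b := by
  induction h with
  | @po a b hab =>
    exact ⟨{(a, b)}, ∅, Set.finite_singleton _, Set.finite_empty, by simpa, by simp, .po rfl⟩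
  | @rf a b hab =>
    exact ⟨∅, {(a, b)}, Set.finite_empty, Set.finite_singleton _, by simp, by simpa, .rf rfl⟩
  | trans _ _ ih₁ ih₂ =>
    obtain ⟨s₁, t₁, hs₁, ht₁, hPO₁, hRF₁, d₁⟩ := ih₁
    obtain ⟨s₂, t₂, hs₂, ht₂, hPO₂, hRF₂, d₂⟩ := ih₂
    refine ⟨s₁ ∪ s₂, t₁ ∪ t₂, hs₁.union hs₂, ht₁.union ht₂,
      fun p hp => hp.elim (hPO₁ p) (hPO₂ p), fun p hp => hp.elim (hRF₁ p) (hRF₂ p), ?_⟩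
    exact .trans (d₁.mono (fun _ _ => Or.inl) (fun _ _ => Or.inl))
      (d₂.mono (fun _ _ => Or.inr) (fun _ _ => Or.inr))
  | @rule2 w r w' hwr _ hw hv hne ih =>
    obtain ⟨s, t, hs, ht, hPO, hRF, d⟩ := ih
    refine ⟨s, insert (w, r) t, hs, ht.insert _, hPO, Set.forall_mem_insert.2 ⟨hwr, hRF⟩, ?_⟩
    exact .rule2 (Set.mem_insert _ _) (d.mono le_rfl fun _ _ => Or.inr) hw hv hne
  | @rule3 w r w' hwr _ hw hv hne ih =>
    obtain ⟨s, t, hs, ht, hPO, hRF, d⟩ := ih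
    refine ⟨s, insert (w, r) t, hs, ht.insert _, hPO, Set.forall_mem_insert.2 ⟨hwr, hRF⟩, ?_⟩
    exact .rule3 (Set.mem_insert _ _) (d.mono le_rfl fun _ _ => Or.inr) hw hv hne

end Derived

/-- Finite support of derived orders. -/
theorem stmt_5 {E V : Type*} (S : EventStructure E V) (PO RF : E → E → Prop)
    (a b : E) (h : Derived S PO RF a b) :
    ∃ S' F : E → E → Prop,
      (∀ x y, S' x y → PO x y) ∧ (∀ x y, F x y → RF x y) ∧
      {p : E × E | S' p.1 p.2}.Finite ∧ {p : E × E | F p.1 p.2}.Finite ∧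
      Derived S S' F a b := by
  obtain ⟨s, t, hs, ht, hPO, hRF, d⟩ := h.exists_finite_support
  exact ⟨fun x y => (x, y) ∈ s, fun x y => (x, y) ∈ t, fun x y => hPO (x, y),
    fun x y => hRF (x, y), hs, ht, d⟩
end

section
/- (Correctness of kernel reasons.) Let S and F be binary relations on the events of an event structure such that (e, e) ∈ Derived(S, F) for some event e. Then every event order graph (PO', RF') over the event structure with S ⊆ PO' and F ⊆ RF' is infeasible; equivalently, if (PO', RF') is feasible, then not (S ⊆ PO' and F ⊆ RF'). -/
/-- Correctness of kernel reasons. -/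
theorem stmt_6 {E V : Type*} (Ev : EventStructure E V) (S F : E → E → Prop)
    (hcyc : ∃ e : E, Derived Ev S F e e) :
    ∀ PO' RF' : E → E → Prop, IsEOG Ev PO' RF' →
      (∀ a b, S a b → PO' a b) → (∀ a b, F a b → RF' a b) →
      ¬ Feasible Ev PO' RF' := by
  rintro PO' RF' hEOG hS hF ⟨lt, W⟩
  obtain ⟨e, he⟩ := hcyc
  have key : ∀ a b, Derived Ev S F a b → lt a b := by
    intro a b h
    induction h with
    | po h => exact W.po _ _ (hS _ _ h)
    | rf h => exact W.rf_lt _ _ (hF _ _ h)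
    | trans _ _ ih1 ih2 => exact W.trans _ _ _ ih1 ih2
    | rule2 hrf _ hw hv hne ih =>
        rcases W.rf_sep _ _ (hF _ _ hrf) _ hw hv hne with h | h
        · exact h
        · exact absurd (W.trans _ _ _ h ih) (W.irrefl _)
    | rule3 hrf _ hw hv hne ih =>
        rcases W.rf_sep _ _ (hF _ _ hrf) _ hw hv hne with h | h
        · exact absurd (W.trans _ _ _ ih h) (W.irrefl _)
        · exact h
  exact W.irrefl e (key e e he)
end

section
/- (Correctness of the refinement constraint.) Let (S₁, F₁), …, (Sₙ, Fₙ) be finitely many pairs of binary relations on the events of an event structure such that for each i there is an event eᵢ with (eᵢ, eᵢ) ∈ Derived(Sᵢ, Fᵢ). Then every feasible event order graph (PO', RF') over the event structure satisfies the refinement constraint: for every i, not (Sᵢ ⊆ PO' and Fᵢ ⊆ RF'). -/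
/-- Correctness of the refinement constraint. -/
theorem stmt_7 {E V : Type*} (Ev : EventStructure E V) (n : ℕ)
    (S F : Fin n → (E → E → Prop))
    (hcyc : ∀ i : Fin n, ∃ e : E, Derived Ev (S i) (F i) e e) :
    ∀ PO' RF' : E → E → Prop, IsEOG Ev PO' RF' → Feasible Ev PO' RF' →
      ∀ i : Fin n, ¬ ((∀ a b, S i a b → PO' a b) ∧ (∀ a b, F i a b → RF' a b)) := by
  rintro PO' RF' hEOG ⟨lt, hw⟩ i ⟨hS, hF⟩
  obtain ⟨e, hd⟩ := hcyc i
  suffices h : ∀ a b, Derived Ev (S i) (F i) a b → lt a b from hw.irrefl e (h e e hd)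
  intro a b hd
  induction hd with
  | po h => exact hw.po _ _ (hS _ _ h)
  | rf h => exact hw.rf_lt _ _ (hF _ _ h)
  | trans h1 h2 ih1 ih2 => exact hw.trans _ _ _ ih1 ih2
  | rule2 hrf _ hWrite hvar hne ih =>
      rcases hw.rf_sep _ _ (hF _ _ hrf) _ hWrite hvar hne with h | h
      · exact h
      · exact absurd (hw.trans _ _ _ ih h) (hw.irrefl _)
  | rule3 hrf _ hWrite hvar hne ih =>
      rcases hw.rf_sep _ _ (hF _ _ hrf) _ hWrite hvar hne with h | h
      · exact absurd (hw.trans _ _ _ h ih) (hw.irrefl _)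
      · exact h
end

section
/- (Refinement progress.) Let (PO, RF) be an event order graph over an event structure such that (e, e) ∈ Derived(PO, RF) for some event e. Then there exist relations S ⊆ PO and F ⊆ RF, each holding for only finitely many pairs of events, such that (e, e) ∈ Derived(S, F); in particular (PO, RF) itself contains S and F, and every EOG (PO', RF') with S ⊆ PO' and F ⊆ RF' — including (PO, RF) itself — is infeasible. -/
lemma derived_mono {E V : Type*} {Ev : EventStructure E V} {S F S' F' : E → E → Prop}
    (hS : ∀ a b, S a b → S' a b) (hF : ∀ a b, F a b → F' a b) {a b : E}
    (h : Derived Ev S F a b) : Derived Ev S' F' a b := by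
  induction h with
  | po h => exact Derived.po (hS _ _ h)
  | rf h => exact Derived.rf (hF _ _ h)
  | trans _ _ ih1 ih2 => exact Derived.trans ih1 ih2
  | rule2 h _ hw hv hne ih => exact Derived.rule2 (hF _ _ h) ih hw hv hne
  | rule3 h _ hw hv hne ih => exact Derived.rule3 (hF _ _ h) ih hw hv hne

lemma derived_sound {E V : Type*} {Ev : EventStructure E V} {PO RF lt : E → E → Prop}
    (hw : FeasibleWitness Ev PO RF lt) {a b : E}
    (h : Derived Ev PO RF a b) : lt a b := by
  induction h with
  | po h => exact hw.po _ _ h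
  | rf h => exact hw.rf_lt _ _ h
  | trans _ _ ih1 ih2 => exact hw.trans _ _ _ ih1 ih2
  | rule2 h _ hW hv hne ih =>
    rcases hw.rf_sep _ _ h _ hW hv hne with h' | h'
    · exact h'
    · exact absurd (hw.trans _ _ _ ih h') (hw.irrefl _)
  | rule3 h _ hW hv hne ih =>
    rcases hw.rf_sep _ _ h _ hW hv hne with h' | h'
    · exact absurd (hw.trans _ _ _ ih h') (hw.irrefl _)
    · exact h'

lemma derived_finite {E V : Type*} {Ev : EventStructure E V} {PO RF : E → E → Prop}
    {a b : E} (h : Derived Ev PO RF a b) :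
    ∃ S F : E → E → Prop,
      (∀ a b, S a b → PO a b) ∧ (∀ a b, F a b → RF a b) ∧
      {p : E × E | S p.1 p.2}.Finite ∧ {p : E × E | F p.1 p.2}.Finite ∧
      Derived Ev S F a b := by
  induction h with
  | @po a b h =>
    refine ⟨fun x y => (x, y) = (a, b), fun _ _ => False, ?_, ?_, ?_, ?_, ?_⟩
    · rintro x y hxy; cases hxy; exact h
    · rintro _ _ ⟨⟩
    · exact (Set.finite_singleton (a, b)).subset (fun p hp => hp)
    · simpa using Set.finite_empty
    · exact Derived.po rfl
  | @rf a b h =>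
    refine ⟨fun _ _ => False, fun x y => (x, y) = (a, b), ?_, ?_, ?_, ?_, ?_⟩
    · rintro _ _ ⟨⟩
    · rintro x y hxy; cases hxy; exact h
    · simpa using Set.finite_empty
    · exact (Set.finite_singleton (a, b)).subset (fun p hp => hp)
    · exact Derived.rf rfl
  | trans _ _ ih1 ih2 =>
    obtain ⟨S1, F1, hS1, hF1, fS1, fF1, hd1⟩ := ih1
    obtain ⟨S2, F2, hS2, hF2, fS2, fF2, hd2⟩ := ih2
    refine ⟨fun x y => S1 x y ∨ S2 x y, fun x y => F1 x y ∨ F2 x y, ?_, ?_, ?_, ?_, ?_⟩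
    · rintro x y (h | h); exacts [hS1 _ _ h, hS2 _ _ h]
    · rintro x y (h | h); exacts [hF1 _ _ h, hF2 _ _ h]
    · exact (fS1.union fS2).subset (fun p hp => hp)
    · exact (fF1.union fF2).subset (fun p hp => hp)
    · exact Derived.trans
        (derived_mono (fun _ _ h => Or.inl h) (fun _ _ h => Or.inl h) hd1)
        (derived_mono (fun _ _ h => Or.inr h) (fun _ _ h => Or.inr h) hd2)
  | @rule2 w r w' h _ hW hv hne ih =>
    obtain ⟨S1, F1, hS1, hF1, fS1, fF1, hd1⟩ := ih
    refine ⟨S1, fun x y => F1 x y ∨ (x, y) = (w, r), hS1, ?_, fS1, ?_, ?_⟩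
    · rintro x y (hxy | hxy)
      · exact hF1 _ _ hxy
      · cases hxy; exact h
    · exact (fF1.union (Set.finite_singleton (w, r))).subset (by
        rintro ⟨x, y⟩ (hp | hp); exacts [Or.inl hp, Or.inr hp])
    · exact Derived.rule2 (Or.inr rfl)
        (derived_mono (fun _ _ h => h) (fun _ _ h => Or.inl h) hd1) hW hv hne
  | @rule3 w r w' h _ hW hv hne ih =>
    obtain ⟨S1, F1, hS1, hF1, fS1, fF1, hd1⟩ := ih
    refine ⟨S1, fun x y => F1 x y ∨ (x, y) = (w, r), hS1, ?_, fS1, ?_, ?_⟩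
    · rintro x y (hxy | hxy)
      · exact hF1 _ _ hxy
      · cases hxy; exact h
    · exact (fF1.union (Set.finite_singleton (w, r))).subset (by
        rintro ⟨x, y⟩ (hp | hp); exacts [Or.inl hp, Or.inr hp])
    · exact Derived.rule3 (Or.inr rfl)
        (derived_mono (fun _ _ h => h) (fun _ _ h => Or.inl h) hd1) hW hv hne

/-- Refinement progress. -/
theorem stmt_8 {E V : Type*} (Ev : EventStructure E V) (PO RF : E → E → Prop)
    (hEOG : IsEOG Ev PO RF) (e : E) (hcyc : Derived Ev PO RF e e) :
    ∃ S F : E → E → Prop,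
      (∀ a b, S a b → PO a b) ∧ (∀ a b, F a b → RF a b) ∧
      {p : E × E | S p.1 p.2}.Finite ∧ {p : E × E | F p.1 p.2}.Finite ∧
      Derived Ev S F e e ∧
      (∀ PO' RF' : E → E → Prop, IsEOG Ev PO' RF' →
        (∀ a b, S a b → PO' a b) → (∀ a b, F a b → RF' a b) →
        ¬ Feasible Ev PO' RF') ∧
      ¬ Feasible Ev PO RF := by
  obtain ⟨S, F, hS, hF, fS, fF, hd⟩ := derived_finite hcyc
  have key : ∀ PO' RF' : E → E → Prop, IsEOG Ev PO' RF' →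
      (∀ a b, S a b → PO' a b) → (∀ a b, F a b → RF' a b) → ¬ Feasible Ev PO' RF' := by
    rintro PO' RF' _ hS' hF' ⟨lt, hw⟩
    exact hw.irrefl e (derived_sound hw (derived_mono hS' hF' hd))
  exact ⟨S, F, hS, hF, fS, fF, hd, key, key PO RF hEOG hS hF⟩
end

section
/- (Scheduling lemma.) Let T be a type, let p be a transitive and irreflexive binary relation on T (a strict partial order), let G be a subset of T, and let ℓ be a binary relation on T that holds only between elements of G, is transitive and irreflexive, is total on G (for distinct a, b ∈ G, either ℓ a b or ℓ b a), and extends the restriction of p to G (for all a, b ∈ G, p a b implies ℓ a b). Then there exists a strict linear order < on T such that p a b implies a < b and ℓ a b implies a < b for all a, b ∈ T. -/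
/-!
Every path of `p ⊔ l` reduces to a single `p`-edge or to a path `p? ; l ; p?`: a `p`-segment
between two `l`-edges joins two elements of `G`, so it is itself an `l`-edge. A cycle of the
second shape would give `l x x`, hence the transitive closure of `p ⊔ l` is a strict order, and
Szpilrajn's theorem extends it to a strict linear order.
-/

open Relation

theorem exists_isStrictTotalOrder_le {α : Type*} (r : α → α → Prop) [IsStrictOrder α r] :
    ∃ s : α → α → Prop, IsStrictTotalOrder α s ∧ r ≤ s := by
  let := partialOrderOfSO r
  refine ⟨((· < ·) : LinearExtension α → LinearExtension α → Prop),
    inferInstanceAs (IsStrictTotalOrder (LinearExtension α) (· < ·)), fun a b hab => ?_⟩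
  exact (toLinearExtension.monotone (Or.inr hab)).lt_of_ne (ne_of_irrefl (r := r) hab)

section Schedule

variable {T : Type*} {p l : T → T → Prop} {G : Set T}

theorem trans_reflGen_of_mem [IsTrans T l] (hlDom : ∀ a b, l a b → a ∈ G ∧ b ∈ G)
    (hlExt : ∀ a b, a ∈ G → b ∈ G → p a b → l a b) {x y b : T} (hxy : l x y)
    (hyb : ReflGen p y b) (hb : b ∈ G) : l x b := by
  rcases hyb with _ | hyb
  · exact hxy
  · exact _root_.trans hxy (hlExt _ _ (hlDom _ _ hxy).2 hb hyb)

theorem transGen_sup_cases [IsTrans T p] [IsTrans T l] (hlDom : ∀ a b, l a b → a ∈ G ∧ b ∈ G)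
    (hlExt : ∀ a b, a ∈ G → b ∈ G → p a b → l a b) {a b : T} (h : TransGen (p ⊔ l) a b) :
    p a b ∨ ∃ x y, ReflGen p a x ∧ l x y ∧ ReflGen p y b := by
  induction h with
  | single hab => exact hab.imp_right fun h => ⟨_, _, .refl, h, .refl⟩
  | @tail b c _ hbc ih =>
    rcases ih, hbc with ⟨hab | ⟨x, y, hax, hxy, hyb⟩, hbc | hbc⟩
    · exact .inl (_root_.trans hab hbc)
    · exact .inr ⟨_, _, .single hab, hbc, .refl⟩
    · exact .inr ⟨x, y, hax, hxy, _root_.trans hyb (.single hbc)⟩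
    · have hxb := trans_reflGen_of_mem hlDom hlExt hxy hyb (hlDom _ _ hbc).1
      exact .inr ⟨x, c, hax, _root_.trans hxb hbc, .refl⟩

theorem isStrictOrder_transGen_sup [IsStrictOrder T p] [IsStrictOrder T l]
    (hlDom : ∀ a b, l a b → a ∈ G ∧ b ∈ G) (hlExt : ∀ a b, a ∈ G → b ∈ G → p a b → l a b) :
    IsStrictOrder T (TransGen (p ⊔ l)) where
  irrefl a h := by
    rcases transGen_sup_cases hlDom hlExt h with h | ⟨x, y, hax, hxy, hya⟩
    · exact irrefl a h
    · have hyx : ReflGen p y x := _root_.trans hya hax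
      exact irrefl x (trans_reflGen_of_mem hlDom hlExt hxy hyx (hlDom _ _ hxy).1)
  trans _ _ _ := TransGen.trans

end Schedule

theorem stmt_9_general {T : Type*} (p : T → T → Prop) (G : Set T) (l : T → T → Prop)
    (hpTrans : ∀ a b c, p a b → p b c → p a c)
    (hpIrrefl : ∀ a, ¬ p a a)
    (hlDom : ∀ a b, l a b → a ∈ G ∧ b ∈ G)
    (hlTrans : ∀ a b c, l a b → l b c → l a c)
    (hlIrrefl : ∀ a, ¬ l a a)
    (hlExt : ∀ a b, a ∈ G → b ∈ G → p a b → l a b) :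
    ∃ lt : T → T → Prop,
      (∀ a, ¬ lt a a) ∧ (∀ a b c, lt a b → lt b c → lt a c) ∧
      (∀ a b, a ≠ b → lt a b ∨ lt b a) ∧
      (∀ a b, p a b → lt a b) ∧ (∀ a b, l a b → lt a b) := by
  have : IsStrictOrder T p := { irrefl := hpIrrefl, trans := hpTrans }
  have : IsStrictOrder T l := { irrefl := hlIrrefl, trans := hlTrans }
  have := isStrictOrder_transGen_sup hlDom hlExt
  obtain ⟨s, hs, hle⟩ := exists_isStrictTotalOrder_le (TransGen (p ⊔ l))
  refine ⟨s, irrefl_of s, fun _ _ _ => trans_of s, fun a b hab => ?_,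
    fun a b h => hle a b (.single (Or.inl h)), fun a b h => hle a b (.single (Or.inr h))⟩
  exact (trichotomous_of s a b).imp_right (Or.resolve_left · hab)

/-- Scheduling lemma. Given a strict partial order `p` on `T`, a
subset `G` of `T`, and a relation `l` holding only between elements of `G`
which is a strict linear order on `G` extending the restriction of `p` to `G`,
there is a strict linear order on `T` extending both `p` and `l`. -/
theorem stmt_9 {T : Type*} (p : T → T → Prop) (G : Set T) (l : T → T → Prop)
    (hpTrans : ∀ a b c, p a b → p b c → p a c)
    (hpIrrefl : ∀ a, ¬ p a a)
    (hlDom : ∀ a b, l a b → a ∈ G ∧ b ∈ G)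
    (hlTrans : ∀ a b c, l a b → l b c → l a c)
    (hlIrrefl : ∀ a, ¬ l a a)
    (hlTotal : ∀ a b, a ∈ G → b ∈ G → a ≠ b → l a b ∨ l b a)
    (hlExt : ∀ a b, a ∈ G → b ∈ G → p a b → l a b) :
    ∃ lt : T → T → Prop,
      (∀ a, ¬ lt a a) ∧ (∀ a b c, lt a b → lt b c → lt a c) ∧
      (∀ a b, a ≠ b → lt a b ∨ lt b a) ∧
      (∀ a b, p a b → lt a b) ∧ (∀ a b, l a b → lt a b) :=
  stmt_9_general p G l hpTrans hpIrrefl hlDom hlTrans hlIrrefl hlExt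
end

section
/- (Acyclicity in the scheduling lemma.) Let T be a type, let p be a transitive and irreflexive binary relation on T, let G be a subset of T, and let ℓ be a binary relation on T that holds only between elements of G, is transitive and irreflexive, is total on G (for distinct a, b ∈ G, either ℓ a b or ℓ b a), and extends the restriction of p to G (for all a, b ∈ G, p a b implies ℓ a b). Then the transitive closure of the union p ∪ ℓ is irreflexive. -/
/-- Acyclicity in the scheduling lemma. Under the hypotheses of
the scheduling lemma, the transitive closure of `p ∪ l` is irreflexive. -/
theorem stmt_10 {T : Type*} (p : T → T → Prop) (G : Set T) (l : T → T → Prop)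
    (hpTrans : ∀ a b c, p a b → p b c → p a c)
    (hpIrrefl : ∀ a, ¬ p a a)
    (hlDom : ∀ a b, l a b → a ∈ G ∧ b ∈ G)
    (hlTrans : ∀ a b c, l a b → l b c → l a c)
    (hlIrrefl : ∀ a, ¬ l a a)
    (hlTotal : ∀ a b, a ∈ G → b ∈ G → a ≠ b → l a b ∨ l b a)
    (hlExt : ∀ a b, a ∈ G → b ∈ G → p a b → l a b) :
    ∀ a : T, ¬ Relation.TransGen (fun x y => p x y ∨ l x y) a a := by
  -- normal form: any transitive-closure path is either pure `p`, or
  -- optional `p`-prefix, one `l`-step, optional `p`-suffix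
  have key : ∀ a b, Relation.TransGen (fun x y => p x y ∨ l x y) a b →
      p a b ∨ ∃ u v, l u v ∧ (p a u ∨ a = u) ∧ (p v b ∨ v = b) := by
    intro a b h
    induction h with
    | @single c h =>
      rcases h with h | h
      · exact Or.inl h
      · exact Or.inr ⟨a, c, h, Or.inr rfl, Or.inr rfl⟩
    | tail _ hbc ih =>
      rename_i b c _
      rcases ih with hab | ⟨u, v, huv, hau, hvb⟩
      · rcases hbc with h | h
        · exact Or.inl (hpTrans _ _ _ hab h)
        · exact Or.inr ⟨b, c, h, Or.inl hab, Or.inr rfl⟩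
      · rcases hbc with h | h
        · refine Or.inr ⟨u, v, huv, hau, Or.inl ?_⟩
          rcases hvb with hvb | rfl
          · exact hpTrans _ _ _ hvb h
          · exact h
        · refine Or.inr ⟨u, c, ?_, hau, Or.inr rfl⟩
          rcases hvb with hvb | rfl
          · have hvG := (hlDom _ _ huv).2
            have hbG := (hlDom _ _ h).1
            exact hlTrans _ _ _ (hlTrans _ _ _ huv (hlExt _ _ hvG hbG hvb)) h
          · exact hlTrans _ _ _ huv h
  intro a h
  rcases key a a h with h | ⟨u, v, huv, hau, hva⟩
  · exact hpIrrefl a h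
  · have huG := (hlDom _ _ huv).1
    have hvG := (hlDom _ _ huv).2
    rcases hau with hau | hau <;> rcases hva with hva | hva
    · exact hlIrrefl v (hlTrans _ _ _ (hlExt v u hvG huG (hpTrans _ _ _ hva hau)) huv)
    · exact hlIrrefl v (hlTrans _ _ _ (hlExt v u hvG huG (hva ▸ hau)) huv)
    · exact hlIrrefl v (hlTrans _ _ _ (hlExt v u hvG huG (hau ▸ hva)) huv)
    · exact hlIrrefl u ((hva.trans hau) ▸ huv)
end

section
/- (Incompleteness of graph-based validation: the butterfly example.) There exists an event structure with finitely many events and an event order graph (PO, RF) over it such that Derived(PO, RF) is irreflexive (there is no event e with (e, e) ∈ Derived(PO, RF)), yet the EOG (PO, RF) is infeasible. Hence the converse of the soundness theorem for the derived-order cycle test fails. -/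
/-!
In the butterfly each of the two variables has two writes, and each write is read by its own
read; program order puts every write of one variable before every read of the other. All
`PO`/`RF` edges go from a write to a read and no read has a competing write among its
predecessors, so none of the derivation rules produces a new edge and `Derived` is just
`PO ∪ RF`, which is acyclic. In a linear witness, however, the two writes of a variable cannot
both precede the other's read, so some read of `x` precedes some write of `x`, and likewise for
`y`; together with program order this closes the cycle `rx < wx < ry < wy < rx`.
-/

namespace Derived

variable {E V : Type*} {S : EventStructure E V} {PO RF : E → E → Prop}

theorem po_or_rf
    (hedge : ∀ a b, PO a b ∨ RF a b → S.isWrite a ∧ ¬ S.isWrite b)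
    (hunique : ∀ w w' r, RF w r → PO w' r ∨ RF w' r → S.isWrite w' → S.var w' = S.var w →
      w' = w)
    {a b : E} (h : Derived S PO RF a b) : PO a b ∨ RF a b := by
  induction h with
  | po h => exact .inl h
  | rf h => exact .inr h
  | trans _ _ ihab ihbc => exact absurd (hedge _ _ ihbc).1 (hedge _ _ ihab).2
  | rule2 hrf _ hw' hvar hne ih => exact absurd (hunique _ _ _ hrf ih hw' hvar) hne
  | rule3 _ _ hw' _ _ ih => exact absurd hw' (hedge _ _ ih).2

theorem irrefl_of_write_to_read
    (hedge : ∀ a b, PO a b ∨ RF a b → S.isWrite a ∧ ¬ S.isWrite b)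
    (hunique : ∀ w w' r, RF w r → PO w' r ∨ RF w' r → S.isWrite w' → S.var w' = S.var w →
      w' = w)
    (a : E) : ¬ Derived S PO RF a a := fun h =>
  have hwr := hedge a a (po_or_rf hedge hunique h)
  hwr.2 hwr.1

end Derived

theorem FeasibleWitness.lt_or_lt_of_rf {E V : Type*} {S : EventStructure E V}
    {PO RF lt : E → E → Prop} (hlt : FeasibleWitness S PO RF lt) {w₁ w₂ r₁ r₂ : E}
    (h₁ : RF w₁ r₁) (h₂ : RF w₂ r₂) (hw₁ : S.isWrite w₁) (hw₂ : S.isWrite w₂)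
    (hvar : S.var w₁ = S.var w₂) (hne : w₁ ≠ w₂) : lt r₁ w₂ ∨ lt r₂ w₁ := by
  rcases hlt.rf_sep w₁ r₁ h₁ w₂ hw₂ hvar.symm hne.symm with h₂₁ | h
  · rcases hlt.rf_sep w₂ r₂ h₂ w₁ hw₁ hvar hne with h₁₂ | h
    · exact absurd (hlt.trans _ _ _ h₂₁ h₁₂) (hlt.irrefl _)
    · exact .inr h
  · exact .inl h

@[ext]
structure ButterflyEvent where
  var : Fin 2
  isWrite : Bool
  index : Fin 2
  deriving DecidableEq, Fintype

namespace ButterflyEvent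

def eventStructure : EventStructure ButterflyEvent (Fin 2) := ⟨var, fun e => e.isWrite⟩

def po (a b : ButterflyEvent) : Prop := a.isWrite ∧ ¬ b.isWrite ∧ a.var ≠ b.var

def rf (a b : ButterflyEvent) : Prop :=
  a.isWrite ∧ ¬ b.isWrite ∧ a.var = b.var ∧ a.index = b.index

theorem isEOG : IsEOG eventStructure po rf := fun _ _ ⟨hw, hr, hvar, _⟩ => ⟨hw, hr, hvar⟩

theorem derived_irrefl (e : ButterflyEvent) : ¬ Derived eventStructure po rf e e := by
  refine Derived.irrefl_of_write_to_read ?_ ?_ e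
  · rintro a b (⟨hw, hr, _⟩ | ⟨hw, hr, _⟩) <;> exact ⟨hw, hr⟩
  · rintro w w' r ⟨hw, -, hvar, hidx⟩ (⟨-, -, hvar'⟩ | ⟨hw', -, hvar', hidx'⟩) - hvar''
    · exact absurd (hvar''.trans hvar) hvar'
    · ext <;> simp_all

theorem exists_read_lt_write {lt : ButterflyEvent → ButterflyEvent → Prop}
    (hlt : FeasibleWitness eventStructure po rf lt) (v : Fin 2) :
    ∃ i j, lt ⟨v, false, i⟩ ⟨v, true, j⟩ := by
  rcases hlt.lt_or_lt_of_rf (w₁ := ⟨v, true, 0⟩) (w₂ := ⟨v, true, 1⟩) (r₁ := ⟨v, false, 0⟩)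
      (r₂ := ⟨v, false, 1⟩) ⟨rfl, Bool.false_ne_true, rfl, rfl⟩ ⟨rfl, Bool.false_ne_true, rfl, rfl⟩
      rfl rfl rfl (by simp) with h | h
  exacts [⟨_, _, h⟩, ⟨_, _, h⟩]

theorem not_feasible : ¬ Feasible eventStructure po rf := by
  rintro ⟨lt, hlt⟩
  obtain ⟨i, j, hx⟩ := exists_read_lt_write hlt 0
  obtain ⟨k, l, hy⟩ := exists_read_lt_write hlt 1
  have hxy := hlt.po ⟨0, true, j⟩ ⟨1, false, k⟩ ⟨rfl, Bool.false_ne_true, Fin.zero_ne_one⟩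
  have hyx := hlt.po ⟨1, true, l⟩ ⟨0, false, i⟩ ⟨rfl, Bool.false_ne_true, Fin.zero_ne_one.symm⟩
  exact hlt.irrefl _ (hlt.trans _ _ _ hx (hlt.trans _ _ _ hxy (hlt.trans _ _ _ hy hyx)))

end ButterflyEvent

/-- Incompleteness of graph-based validation (the butterfly
example): there is a finite event structure and an EOG over it whose derived
order relation is irreflexive, yet the EOG is infeasible. -/
theorem stmt_11 :
    ∃ (E V : Type) (_ : Finite E) (S : EventStructure E V) (PO RF : E → E → Prop),
      IsEOG S PO RF ∧ (∀ e : E, ¬ Derived S PO RF e e) ∧ ¬ Feasible S PO RF :=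
  ⟨ButterflyEvent, Fin 2, inferInstance, ButterflyEvent.eventStructure, ButterflyEvent.po,
    ButterflyEvent.rf, ButterflyEvent.isEOG, ButterflyEvent.derived_irrefl,
    ButterflyEvent.not_feasible⟩
end

section
/- If an event order graph (PO, RF) over an event structure is feasible, then the derived order relation Derived(PO, RF) is a strict partial order: it is transitive and irreflexive (no event e satisfies (e, e) ∈ Derived(PO, RF)). -/
/-- Feasibility implies the derived order relation is a strict
partial order: transitive and irreflexive. -/
theorem stmt_13 {E V : Type*} (S : EventStructure E V) (PO RF : E → E → Prop)
    (hEOG : IsEOG S PO RF) (hfeas : Feasible S PO RF) :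
    (∀ a b c : E, Derived S PO RF a b → Derived S PO RF b c → Derived S PO RF a c) ∧
    (∀ e : E, ¬ Derived S PO RF e e) := by
  obtain ⟨lt, hw⟩ := hfeas
  have key : ∀ a b, Derived S PO RF a b → lt a b := by
    intro a b h
    induction h with
    | po h => exact hw.po _ _ h
    | rf h => exact hw.rf_lt _ _ h
    | trans _ _ ih1 ih2 => exact hw.trans _ _ _ ih1 ih2
    | rule2 hrf _ hW hv hne ih =>
      rcases hw.rf_sep _ _ hrf _ hW hv hne with h | h
      · exact h
      · exact absurd (hw.trans _ _ _ ih h) (hw.irrefl _)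
    | rule3 hrf _ hW hv hne ih =>
      rcases hw.rf_sep _ _ hrf _ hW hv hne with h | h
      · exact absurd (hw.trans _ _ _ ih h) (hw.irrefl _)
      · exact h
  exact ⟨fun a b c h1 h2 => Derived.trans h1 h2, fun e h => hw.irrefl e (key e e h)⟩
end
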